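/- arXiv:1808.08416 — 2 statements merged into one kernel-verified Lean document; each statement's English description precedes it below -/
import Mathlib

section
/- Let a, b, c, d, p be positive reals with p ≠ 1, and suppose max{b/a, d/c} ≤ p^{2/5}, a ≤ b, c ≤ d. Suppose there exist x ∈ [a,b], y ∈ [c,d] and an integer z such that x·p^z = y. Then there exists a unique integer n such that the interval [a·p^n, b·p^n] intersects [c, d]. -/
open Set in
/-- unique integer shift making the intervals intersect. -/
theorem stmt_1 (a b c d p : ℝ) (ha : 0 < a) (hb : 0 < b) (hc : 0 < c) (hd : 0 < d)
    (hp : 0 < p) (hp1 : p ≠ 1) (hab : a ≤ b) (hcd : c ≤ d)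
    (hba : b / a ≤ p ^ ((2 : ℝ) / 5)) (hdc : d / c ≤ p ^ ((2 : ℝ) / 5))
    (hex : ∃ x ∈ Icc a b, ∃ y ∈ Icc c d, ∃ z : ℤ, x * p ^ z = y) :
    ∃! n : ℤ, (Icc (a * p ^ n) (b * p ^ n) ∩ Icc c d).Nonempty := by
  obtain ⟨x, ⟨hx1, hx2⟩, y, hy, z, hxyz⟩ := hex
  have h1p : 1 < p := by
    rcases lt_trichotomy p 1 with h | h | h
    · exfalso
      have h2 : p ^ ((2:ℝ)/5) < 1 := Real.rpow_lt_one hp.le h (by norm_num)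
      have h1 : (1:ℝ) ≤ b / a := (one_le_div ha).2 hab
      linarith
    · exact absurd h hp1
    · exact h
  have key : ∀ m n : ℤ, (Icc (a * p ^ m) (b * p ^ m) ∩ Icc c d).Nonempty →
      (Icc (a * p ^ n) (b * p ^ n) ∩ Icc c d).Nonempty → m ≤ n := by
    intro m n hm hn
    obtain ⟨t, ⟨ht1, ht2⟩, ht3, ht4⟩ := hm
    obtain ⟨s, ⟨hs1, hs2⟩, hs3, hs4⟩ := hn
    have hd' : d ≤ c * p ^ ((2:ℝ)/5) := by rw [div_le_iff₀ hc] at hdc; linarith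
    have hb' : b ≤ a * p ^ ((2:ℝ)/5) := by rw [div_le_iff₀ ha] at hba; linarith
    have hpn : (0:ℝ) < p ^ n := zpow_pos hp n
    have hr : (0:ℝ) < p ^ ((2:ℝ)/5) := Real.rpow_pos_of_pos hp _
    -- a p^m ≤ d ≤ c p^(2/5) ≤ b p^n p^(2/5) ≤ a p^(2/5) p^n p^(2/5)
    have h1 : a * p ^ m ≤ d := le_trans ht1 ht4
    have h2 : c ≤ b * p ^ n := le_trans hs3 hs2
    have h3 : a * p ^ m ≤ a * p ^ ((2:ℝ)/5) * p ^ n * p ^ ((2:ℝ)/5) := by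
      calc a * p ^ m ≤ d := h1
        _ ≤ c * p ^ ((2:ℝ)/5) := hd'
        _ ≤ (b * p ^ n) * p ^ ((2:ℝ)/5) := mul_le_mul_of_nonneg_right h2 hr.le
        _ ≤ a * p ^ ((2:ℝ)/5) * p ^ n * p ^ ((2:ℝ)/5) :=
            mul_le_mul_of_nonneg_right (mul_le_mul_of_nonneg_right hb' hpn.le) hr.le
    have h4 : (p:ℝ) ^ (m:ℝ) ≤ p ^ ((n:ℝ) + 4/5) := by
      rw [Real.rpow_add hp, Real.rpow_intCast]
      have : ((4:ℝ)/5) = (2:ℝ)/5 + 2/5 := by norm_num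
      rw [this, Real.rpow_add hp, Real.rpow_intCast] at *
      nlinarith
    have h5 : (m:ℝ) ≤ (n:ℝ) + 4/5 :=
      (Real.rpow_le_rpow_left_iff h1p).1 h4
    have : (m:ℝ) < (n:ℝ) + 1 := by linarith
    exact_mod_cast Int.lt_add_one_iff.1 (by exact_mod_cast this)
  refine ⟨z, ⟨y, ⟨?_, ?_⟩, hy⟩, fun m hm => le_antisymm (key m z hm ?_) (key z m ?_ hm)⟩
  · rw [← hxyz]; exact mul_le_mul_of_nonneg_right hx1 (zpow_pos hp z).le
  · rw [← hxyz]; exact mul_le_mul_of_nonneg_right hx2 (zpow_pos hp z).le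
  all_goals
    exact ⟨y, ⟨by rw [← hxyz]; exact mul_le_mul_of_nonneg_right hx1 (zpow_pos hp z).le,
      by rw [← hxyz]; exact mul_le_mul_of_nonneg_right hx2 (zpow_pos hp z).le⟩, hy⟩
end

section
/- Let X be a nonnegative real random variable with mean μ > 0 satisfying the tail bound P(X > μ + t) < exp(-t²/2) for all t ≥ 0, and suppose μ ≤ 0.05. Then P(X > 0) > μ / (5·log(1/μ)). -/
/-!
By the layer cake formula, `μ = ∫₀^∞ P(X > t) dt`. Split at `T = μ + 2√(log (1/μ))`: below `T` the
integrand is at most `P(X > 0)`, above `T` it is at most the Gaussian tail `exp (-(t - μ)² / 2)`,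
whose integral is at most `exp (-2 log (1/μ)) / (2√(log (1/μ))) = μ² / (2√(log (1/μ)))`. Hence
`μ ≤ T · P(X > 0) + μ² / (2√(log (1/μ)))`, and solving for `P(X > 0)` gives the bound once
`μ ≤ 0.05`.
-/

open MeasureTheory Real Set Filter Topology

lemma hasDerivAt_neg_exp_neg_sq_div_two (c t : ℝ) :
    HasDerivAt (fun t ↦ -exp (-(t - c) ^ 2 / 2)) ((t - c) * exp (-(t - c) ^ 2 / 2)) t := by
  have h : HasDerivAt (fun t ↦ -(t - c) ^ 2 / 2) (-(t - c)) t :=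
    ((((hasDerivAt_id t).sub_const c).pow 2).neg.div_const 2).congr_deriv
      (by simp only [id_eq]; ring)
  exact h.exp.neg.congr_deriv (by ring)

lemma tendsto_neg_exp_neg_sq_div_two_atTop (c : ℝ) :
    Tendsto (fun t ↦ -exp (-(t - c) ^ 2 / 2)) atTop (𝓝 0) := by
  rw [← neg_zero]
  refine (tendsto_exp_atBot.comp ?_).neg
  refine Tendsto.atBot_div_const two_pos (tendsto_neg_atBot_iff.mpr ?_)
  exact (tendsto_pow_atTop two_ne_zero).comp (tendsto_atTop_add_const_right _ (-c) tendsto_id)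

lemma integrable_mul_exp_neg_sq_div_two (c : ℝ) :
    Integrable (fun t ↦ (t - c) * exp (-(t - c) ^ 2 / 2)) := by
  refine ((integrable_mul_exp_neg_mul_sq one_half_pos).comp_sub_right c).congr
    (Eventually.of_forall fun t ↦ ?_)
  ring_nf

lemma integrable_exp_neg_sq_div_two (c : ℝ) :
    Integrable (fun t ↦ exp (-(t - c) ^ 2 / 2)) := by
  refine ((integrable_exp_neg_mul_sq one_half_pos).comp_sub_right c).congr
    (Eventually.of_forall fun t ↦ ?_)
  ring_nf

lemma integral_Ioi_mul_exp_neg_sq_div_two (c T : ℝ) :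
    ∫ t in Ioi T, (t - c) * exp (-(t - c) ^ 2 / 2) = exp (-(T - c) ^ 2 / 2) := by
  rw [integral_Ioi_of_hasDerivAt_of_tendsto' (fun t _ ↦ hasDerivAt_neg_exp_neg_sq_div_two c t)
    (integrable_mul_exp_neg_sq_div_two c).integrableOn (tendsto_neg_exp_neg_sq_div_two_atTop c)]
  ring

/-- On `(c + a, ∞)` the Gaussian density is dominated by `(t - c) / a` times itself, which has an
explicit antiderivative. -/
lemma integral_Ioi_exp_neg_sq_div_two_le (c : ℝ) {a : ℝ} (ha : 0 < a) :
    ∫ t in Ioi (c + a), exp (-(t - c) ^ 2 / 2) ≤ exp (-a ^ 2 / 2) / a :=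
  calc ∫ t in Ioi (c + a), exp (-(t - c) ^ 2 / 2)
      ≤ ∫ t in Ioi (c + a), a⁻¹ * ((t - c) * exp (-(t - c) ^ 2 / 2)) := by
        refine setIntegral_mono_on (integrable_exp_neg_sq_div_two c).integrableOn
          ((integrable_mul_exp_neg_sq_div_two c).const_mul _).integrableOn measurableSet_Ioi
          fun t ht ↦ ?_
        rw [← mul_assoc]
        refine le_mul_of_one_le_left (exp_pos _).le ?_
        rw [inv_mul_eq_div, one_le_div ha]
        linarith [mem_Ioi.mp ht]
    _ = exp (-a ^ 2 / 2) / a := by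
        rw [integral_const_mul, integral_Ioi_mul_exp_neg_sq_div_two, add_sub_cancel_left,
          inv_mul_eq_div]

section LayerCake

variable {Ω : Type*} [MeasurableSpace Ω] {P : Measure Ω} {X : Ω → ℝ}

lemma integrableOn_Ioi_measureReal_lt (hint : Integrable X P) (hnn : 0 ≤ᵐ[P] X) :
    IntegrableOn (fun t ↦ P.real {ω | t < X ω}) (Ioi 0) := by
  have hanti : Antitone fun t : ℝ ↦ P {ω | t < X ω} :=
    fun _ _ hst ↦ measure_mono fun _ h ↦ hst.trans_lt h
  refine ⟨hanti.measurable.ennreal_toReal.aestronglyMeasurable, ?_⟩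
  rw [hasFiniteIntegral_iff_ofReal (Eventually.of_forall fun _ ↦ measureReal_nonneg)]
  simp only [measureReal_def]
  rw [setLIntegral_congr_fun (g := fun t ↦ P {ω | t < X ω}) measurableSet_Ioi
    fun t ht ↦ ENNReal.ofReal_toReal (hint.measure_gt_lt_top ht).ne,
    ← lintegral_eq_lintegral_meas_lt P hnn hint.aemeasurable]
  exact hint.lintegral_lt_top

lemma integral_le_mul_measureReal_pos_add_integral_Ioi [IsFiniteMeasure P]
    (hint : Integrable X P) (hnn : 0 ≤ᵐ[P] X) {T : ℝ} (hT : 0 ≤ T) {f : ℝ → ℝ}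
    (hf : IntegrableOn f (Ioi T)) (htail : ∀ t > T, P.real {ω | t < X ω} ≤ f t) :
    ∫ ω, X ω ∂P ≤ T * P.real {ω | 0 < X ω} + ∫ t in Ioi T, f t := by
  set g : ℝ → ℝ := fun t ↦ P.real {ω | t < X ω}
  have hg : IntegrableOn g (Ioi 0) := integrableOn_Ioi_measureReal_lt hint hnn
  have hhead : ∫ t in Ioc 0 T, g t ≤ T * g 0 :=
    calc ∫ t in Ioc 0 T, g t ≤ ∫ _ in Ioc 0 T, g 0 :=
          setIntegral_mono_on (hg.mono_set Ioc_subset_Ioi_self)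
            (integrableOn_const measure_Ioc_lt_top.ne) measurableSet_Ioc
            fun t ht ↦ measureReal_mono (fun _ h ↦ ht.1.trans h)
      _ = T * g 0 := by rw [setIntegral_const, volume_real_Ioc_of_le hT, sub_zero, smul_eq_mul]
  have htail' : ∫ t in Ioi T, g t ≤ ∫ t in Ioi T, f t :=
    setIntegral_mono_on (hg.mono_set (Ioi_subset_Ioi hT)) hf measurableSet_Ioi htail
  calc ∫ ω, X ω ∂P = ∫ t in Ioi 0, g t := hint.integral_eq_integral_meas_lt hnn
    _ = (∫ t in Ioc 0 T, g t) + ∫ t in Ioi T, g t := by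
        rw [← setIntegral_union (Ioc_disjoint_Ioi le_rfl) measurableSet_Ioi
          (hg.mono_set Ioc_subset_Ioi_self) (hg.mono_set (Ioi_subset_Ioi hT)),
          Ioc_union_Ioi_eq_Ioi hT]
    _ ≤ T * g 0 + ∫ t in Ioi T, f t := add_le_add hhead htail'

end LayerCake

lemma div_five_mul_sq_lt {μ s p : ℝ} (hμ : 0 < μ) (hμ' : μ ≤ 0.05) (hs : 0 ≤ s)
    (hs2 : log 2 ≤ s ^ 2) (h : μ ≤ (μ + 2 * s) * p + μ ^ 2 / (2 * s)) :
    μ / (5 * s ^ 2) < p := by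
  have hs' : 0.83 ≤ s := by nlinarith [log_two_gt_d9]
  have hgap : 0 < 2 * s - μ := by linarith
  have hcleared : μ * (2 * s - μ) ≤ 2 * s * (μ + 2 * s) * p := by
    have := mul_le_mul_of_nonneg_left h (by linarith : (0 : ℝ) ≤ 2 * s)
    rw [mul_add, mul_div_cancel₀ _ (by linarith : (2 * s : ℝ) ≠ 0)] at this
    linarith
  have hp : 0 < p := by
    by_contra! hp
    nlinarith [mul_pos hμ hgap, mul_nonpos_of_nonneg_of_nonpos
      (by positivity : (0 : ℝ) ≤ 2 * s * (μ + 2 * s)) hp]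
  have hcoeff : 2 * s * (μ + 2 * s) < 5 * s ^ 2 * (2 * s - μ) := by nlinarith
  rw [div_lt_iff₀ (by positivity)]
  refine lt_of_mul_lt_mul_right ?_ hgap.le
  nlinarith [mul_lt_mul_of_pos_right hcoeff hp]

theorem stmt_2_general {Ω : Type*} [MeasurableSpace Ω] (P : Measure Ω) [IsProbabilityMeasure P]
    (X : Ω → ℝ) (μ : ℝ) (hμ : 0 < μ) (hμ' : μ ≤ 0.05)
    (hnn : ∀ᵐ ω ∂P, 0 ≤ X ω)
    (hint : Integrable X P) (hmean : ∫ ω, X ω ∂P = μ)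
    (htail : ∀ t : ℝ, 0 ≤ t → (P {ω | X ω > μ + t}).toReal < Real.exp (-t ^ 2 / 2)) :
    (P {ω | X ω > 0}).toReal > μ / (5 * Real.log (1 / μ)) := by
  set s := √(log (1 / μ))
  have hlog : log 2 ≤ log (1 / μ) :=
    log_le_log two_pos (by rw [le_div_iff₀ hμ]; linarith)
  have hs2 : s ^ 2 = log (1 / μ) := sq_sqrt (by linarith [log_pos one_lt_two])
  have hs : 0 < s := sqrt_pos.mpr (by linarith [log_pos one_lt_two])
  have hexp : exp (-(2 * s) ^ 2 / 2) = μ ^ 2 := by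
    rw [show -(2 * s) ^ 2 / 2 = log (μ ^ 2) by
      rw [log_pow, mul_pow, hs2, one_div, log_inv]; push_cast; ring, exp_log (by positivity)]
  have hbound := integral_le_mul_measureReal_pos_add_integral_Ioi hint hnn
    (T := μ + 2 * s) (by positivity) (integrable_exp_neg_sq_div_two μ).integrableOn
    fun t ht ↦ by
      have h := (htail (t - μ) (by linarith)).le
      rwa [add_sub_cancel] at h
  have hgauss := integral_Ioi_exp_neg_sq_div_two_le μ (by positivity : 0 < 2 * s)
  rw [hexp] at hgauss
  rw [hmean] at hbound
  show μ / _ < P.real {ω | 0 < X ω}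
  rw [← hs2]
  exact div_five_mul_sq_lt hμ hμ' hs.le (hs2 ▸ hlog) (by linarith)

/-- sub-Gaussian positivity bound for small mean. -/
theorem stmt_2 {Ω : Type*} [MeasurableSpace Ω] (P : Measure Ω) [IsProbabilityMeasure P]
    (X : Ω → ℝ) (μ : ℝ) (hμ : 0 < μ) (hμ' : μ ≤ 0.05)
    (hmeas : Measurable X) (hnn : ∀ᵐ ω ∂P, 0 ≤ X ω)
    (hint : Integrable X P) (hmean : ∫ ω, X ω ∂P = μ)
    (htail : ∀ t : ℝ, 0 ≤ t → (P {ω | X ω > μ + t}).toReal < Real.exp (-t ^ 2 / 2)) :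
    (P {ω | X ω > 0}).toReal > μ / (5 * Real.log (1 / μ)) :=
  stmt_2_general P X μ hμ hμ' hnn hint hmean htail
end
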